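/- arXiv:2508.21647 — 3 statements merged into one kernel-verified Lean document; each statement's English description precedes it below -/
import Mathlib

section
/- Every non-empty antichain Γ in the positive roots Δ⁺ of a finite root system is linearly independent in the root space. -/
/-!
Choose a linear functional `f` equal to `1` on the simple roots; it is positive on every positive
root. If two distinct elements `α = αᵢ`, `β = αⱼ` of the antichain had `⟨αᵢ, αⱼ^∨⟩ > 0`, then
`α - β` would be a root, hence positive or negative, making `α` and `β` comparable. So the
antichain consists of vectors with pairwise non-positive inner products (for the canonical
positive definite form) lying in the open half-space `f > 0`, and such vectors are linearly
independent.
-/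

section OrderDefs

variable {V : Type*} [AddCommGroup V]

/-- The partial order on roots: `α ≼ β` iff `β - α` is a sum of simple roots (elements of `P`). -/
def rootLE (P : Set V) (α β : V) : Prop :=
  β - α ∈ AddSubmonoid.closure P

/-- An antichain in the positive roots `Δplus`: a set of pairwise non-comparable
positive roots, where `P` is the set of simple roots defining the order. -/
def IsAntichainIn (P Δplus Γ : Set V) : Prop :=
  Γ ⊆ Δplus ∧ ∀ α ∈ Γ, ∀ β ∈ Γ, α ≠ β → ¬ rootLE P α β

end OrderDefs

open Module Set Submodule

lemma AddSubmonoid.eq_zero_or_pos_of_mem_closure {M R : Type*} [AddCommMonoid M]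
    [AddCommMonoid R] [PartialOrder R] [IsOrderedCancelAddMonoid R] (f : M →+ R) {S : Set M}
    (hS : ∀ s ∈ S, 0 < f s) {x : M} (hx : x ∈ AddSubmonoid.closure S) : x = 0 ∨ 0 < f x := by
  induction hx using AddSubmonoid.closure_induction with
  | mem s hs => exact Or.inr (hS s hs)
  | zero => exact Or.inl rfl
  | add x y _ _ hx hy =>
    rcases hx with rfl | hx <;> rcases hy with rfl | hy
    · exact Or.inl (add_zero 0)
    · simpa using Or.inr hy
    · simpa using Or.inr hx
    · exact Or.inr (by simpa using add_pos hx hy)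

lemma IsAntichainIn.sub_notMem {V : Type*} [AddCommGroup V] {P Δplus Γ Φ : Set V}
    (hΓ : IsAntichainIn P Δplus Γ)
    (hΦ : ∀ x ∈ Φ, x ∈ AddSubmonoid.closure P ∨ -x ∈ AddSubmonoid.closure P)
    {α β : V} (hα : α ∈ Γ) (hβ : β ∈ Γ) (hne : α ≠ β) : α - β ∉ Φ := by
  intro h
  rcases hΦ _ h with h | h
  · exact hΓ.2 β hβ α hα hne.symm h
  · exact hΓ.2 α hα β hβ hne (by rwa [neg_sub] at h)

namespace RootPairing

variable {ι R M N : Type*} [Finite ι] [CommRing R] [LinearOrder R] [IsStrictOrderedRing R]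
  [AddCommGroup M] [Module R M] [AddCommGroup N] [Module R N] (P : RootPairing ι R M N)

lemma linearIndepOn_root_of_pairwise_pairing_nonpos (f : Dual R M) {s : Set ι}
    (hp : ∀ i ∈ s, 0 < f (P.root i)) (hn : s.Pairwise fun i j ↦ P.pairing i j ≤ 0) :
    LinearIndepOn R P.root s := by
  have : Fintype ι := Fintype.ofFinite ι
  let M₀ := span R (range P.root)
  let v (i : s) : M₀ := P.rootSpanMem R i
  change LinearIndependent R (M₀.subtype ∘ v)
  refine LinearIndependent.map' ?_ M₀.subtype M₀.ker_subtype
  refine (P.posRootForm R).posForm.linearIndependent_of_pairwise_le_zero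
    (by simpa using P.posRootForm_rootFormIn_posDef R) (f ∘ₗ M₀.subtype) v
    (fun i ↦ by simpa [v] using hp i i.2) ?_
  rintro ⟨i, hi⟩ ⟨j, hj⟩ hij
  rw [show v ⟨i, hi⟩ = ⟨P.root i, _⟩ from rfl, show v ⟨j, hj⟩ = ⟨P.root j, _⟩ from rfl,
    RootPositiveForm.posForm_apply_root_root_le_zero_iff]
  have hpairingIn : P.pairingIn R i j = P.pairing i j := by
    simpa using P.algebraMap_pairingIn R i j
  exact hpairingIn ▸ hn hi hj (by simpa using hij)

lemma pairing_nonpos_of_root_sub_notMem [P.IsCrystallographic] {i j : ι} (hij : i ≠ j)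
    (h : P.root i - P.root j ∉ range P.root) : P.pairing i j ≤ 0 := by
  have := mt (P.root_sub_root_mem_of_pairingIn_pos · hij) h
  simpa [← P.algebraMap_pairingIn ℤ] using this

end RootPairing

theorem antichain_linearIndependent_general
    {ι M N : Type*} [Fintype ι] [AddCommGroup M] [Module ℚ M] [AddCommGroup N] [Module ℚ N]
    (Q : RootPairing ι ℚ M N)
    (hcrys : Q.IsCrystallographic)
    -- a system of positive roots `pos` with corresponding simple roots `sim`
    (pos sim : Set ι)
    (hspan : ∀ i ∈ pos, Q.root i ∈ AddSubmonoid.closure (Q.root '' sim))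
    (hdec : ∀ i : ι, i ∈ pos ∨ ∃ j ∈ pos, Q.root i = -Q.root j)
    (hind : LinearIndependent ℚ (fun s : sim => Q.root s))
    (Γ : Set M) (hΓ : IsAntichainIn (Q.root '' sim) (Q.root '' pos) Γ) :
    LinearIndependent ℚ (fun a : Γ => (a : M)) := by
  obtain ⟨f, hf⟩ := Module.exists_dual_forall_apply_eq_one (v := Q.root) hind
  have hf_pos (i : ι) (hi : i ∈ pos) : 0 < f (Q.root i) :=
    (AddSubmonoid.eq_zero_or_pos_of_mem_closure (f : M →+ ℚ)
      (by rintro _ ⟨s, hs, rfl⟩; simp [hf s hs]) (hspan i hi)).resolve_left (Q.ne_zero i)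
  have hroots : ∀ x ∈ range Q.root, x ∈ AddSubmonoid.closure (Q.root '' sim) ∨
      -x ∈ AddSubmonoid.closure (Q.root '' sim) := by
    rintro _ ⟨k, rfl⟩
    rcases hdec k with hk | ⟨k', hk', hkk'⟩
    · exact Or.inl (hspan k hk)
    · exact Or.inr (by rw [hkk', neg_neg]; exact hspan k' hk')
  have hΓ_image : Q.root '' (pos ∩ Q.root ⁻¹' Γ) = Γ := by
    refine Subset.antisymm (image_subset_iff.mpr inter_subset_right) fun a ha ↦ ?_
    obtain ⟨i, hi, rfl⟩ := hΓ.1 ha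
    exact ⟨i, ⟨hi, ha⟩, rfl⟩
  have hli := Q.linearIndepOn_root_of_pairwise_pairing_nonpos f (fun i hi ↦ hf_pos i hi.1)
    fun i (hi : i ∈ pos ∩ Q.root ⁻¹' Γ) j (hj : j ∈ pos ∩ Q.root ⁻¹' Γ) hij ↦
      Q.pairing_nonpos_of_root_sub_notMem hij
        (hΓ.sub_notMem hroots hi.2 hj.2 (Q.root.injective.ne hij))
  have := hli.id_image
  rwa [hΓ_image] at this

/-- Every non-empty antichain `Γ` in the positive roots of a finite root
system is linearly independent. -/
theorem antichain_linearIndependent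
    {ι M N : Type*} [Fintype ι] [AddCommGroup M] [Module ℚ M] [AddCommGroup N] [Module ℚ N]
    (Q : RootPairing ι ℚ M N) (hQspan : Submodule.span ℚ (Set.range Q.root) = ⊤)
    (hcrys : Q.IsCrystallographic) (hredu : Q.IsReduced)
    -- a system of positive roots `pos` with corresponding simple roots `sim`
    (pos sim : Set ι) (hsim : sim ⊆ pos)
    (hspan : ∀ i ∈ pos, Q.root i ∈ AddSubmonoid.closure (Q.root '' sim))
    (hdec : ∀ i : ι, i ∈ pos ∨ ∃ j ∈ pos, Q.root i = -Q.root j)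
    (hind : LinearIndependent ℚ (fun s : sim => Q.root s))
    (Γ : Set M) (hΓ : IsAntichainIn (Q.root '' sim) (Q.root '' pos) Γ)
    (hΓne : Γ.Nonempty) :
    LinearIndependent ℚ (fun a : Γ => (a : M)) :=
  antichain_linearIndependent_general Q hcrys pos sim hspan hdec hind Γ hΓ
end

section
/- Let Γ ⊆ Δ⁺ be a non-empty antichain in the positive roots of a finite root system of rank ℓ with simple roots α₁,…,α_ℓ. Then there exist H in the Cartan subalgebra h and a positive integer n such that α_i(H) is a positive integer for every simple root α_i, and γ(H) = n for every γ ∈ Γ. -/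
/-!
By Gordan's theorem of the alternative, a functional positive on the simple roots and constant
on `Γ` exists unless `∑ y_α α = ∑ u_γ γ` with `y ≥ 0`, `y ≠ 0` and `∑ u_γ = 0`. Clearing
denominators and separating signs turns such a relation into `∑ a = ∑ d + ∑ c` for multisets `a`,
`d` of elements of `Γ` with `|a| = |d|` and a nonempty multiset `c` of simple roots; as `Γ` is an
antichain, no element of `d` lies below an element of `a`.

Such a relation forces `a = 0` and then, by heights, `c = 0`; induct on `(|a|, |c|)`. If some
`x ∈ a`, `y ∈ d` have `(x, y) > 0`, then `x - y` is a root, so `x < y`; dropping `x` and `y` and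
adding the simple roots of `y - x` to `c` gives a relation whose `c` cannot vanish. Otherwise
`(∑ d, ∑ c) = (∑ d, ∑ a) - (∑ d, ∑ d) < 0`, so `(y, z) < 0` for some `y ∈ d`, `z ∈ c`; then
`y + z` is a positive root, which replaces `y` in `d` while `z` leaves `c`.

Scaling the rational functional by a common denominator makes its values integral.
-/

section Alternatives

variable {F V : Type*} [Field F] [LinearOrder F] [IsStrictOrderedRing F]
  [AddCommGroup V] [Module F V]

-- Farkas' lemma, by Bartl's induction on the number of constraints.
theorem Module.Dual.mem_hull_of_nonneg {ι : Type*} (s : Finset ι) (f : ι → Module.Dual F V)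
    (b : Module.Dual F V) (h : ∀ x, (∀ i ∈ s, 0 ≤ f i x) → 0 ≤ b x) :
    b ∈ PointedCone.hull F (f '' s) := by
  classical
  induction s using Finset.induction_on generalizing f b with
  | empty =>
    have hb : b = 0 := LinearMap.ext fun x => le_antisymm (by simpa using h (-x) (by simp))
      (h x (by simp))
    exact hb ▸ zero_mem _
  | insert a s ha ih =>
    rw [Finset.coe_insert]
    by_cases hs : ∀ x, (∀ i ∈ s, 0 ≤ f i x) → 0 ≤ b x
    · exact Submodule.span_mono (Set.image_mono (by simp)) (ih f b hs)
    push Not at hs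
    obtain ⟨x₀, hx₀, hbx₀⟩ := hs
    have hax₀ : f a x₀ < 0 := by
      by_contra! hax₀
      exact hbx₀.not_ge (h x₀ (Finset.forall_mem_insert _ _ _ |>.mpr ⟨hax₀, hx₀⟩))
    have hfa : f a ∈ PointedCone.hull F (f '' insert a s) := Submodule.subset_span ⟨a, by simp, rfl⟩
    -- Precomposing with the projection along `x₀` onto `ker (f a)` removes the constraint `f a`.
    let p (g : Module.Dual F V) : Module.Dual F V := g + (-(g x₀ / f a x₀)) • f a
    have hp (g : Module.Dual F V) (x : V) : p g x = g (x - (f a x / f a x₀) • x₀) := by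
      simp only [p, LinearMap.add_apply, LinearMap.smul_apply, smul_eq_mul, map_sub, map_smul]
      field_simp
      ring
    have hpb : p b ∈ PointedCone.hull F ((p ∘ f) '' s) := ih (p ∘ f) (p b) fun x hx => by
      rw [hp]
      refine h _ (Finset.forall_mem_insert _ _ _ |>.mpr ⟨?_, fun i hi => ?_⟩)
      · simp [hax₀.ne]
      · rw [← hp]; exact hx i hi
    have hle : PointedCone.hull F ((p ∘ f) '' s) ≤ PointedCone.hull F (f '' insert a s) := by
      refine Submodule.span_le.mpr ?_
      rintro _ ⟨i, hi, rfl⟩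
      refine add_mem (Submodule.subset_span ⟨i, by simp [hi], rfl⟩)
        (PointedCone.smul_mem _ ?_ hfa)
      exact neg_nonneg.mpr (div_nonpos_of_nonneg_of_nonpos (hx₀ i hi) hax₀.le)
    have hb : b = p b + (b x₀ / f a x₀) • f a := by simp only [p]; module
    rw [hb]
    exact add_mem (hle hpb) (PointedCone.smul_mem _ (div_nonneg_of_nonpos hbx₀.le hax₀.le) hfa)

-- Gordan's theorem.
theorem exists_dual_forall_pos {ι : Type*} [Fintype ι] (x : ι → V)
    (h : ∀ y : ι → F, (∀ i, 0 ≤ y i) → ∑ i, y i • x i = 0 → y = 0) :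
    ∃ φ : Module.Dual F V, ∀ i, 0 < φ (x i) := by
  by_contra! hφ
  -- Farkas on pairs `(φ, t)`: the constraints `φ (x i) + t ≥ 0` force `t ≥ 0`.
  let f (i : ι) : Module.Dual F (Module.Dual F V × F) :=
    Module.Dual.eval F V (x i) ∘ₗ LinearMap.fst F _ F + LinearMap.snd F _ F
  have hsnd := Module.Dual.mem_hull_of_nonneg Finset.univ f (LinearMap.snd F _ F)
    fun ⟨φ, t⟩ hφt => by
      obtain ⟨i, hi⟩ := hφ φ
      have := hφt i (Finset.mem_univ i)
      simp only [f, LinearMap.add_apply, LinearMap.comp_apply, LinearMap.fst_apply,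
        LinearMap.snd_apply, Module.Dual.eval_apply] at this ⊢
      linarith
  rw [Finset.coe_univ, Set.image_univ, Submodule.mem_span_range_iff_exists_fun] at hsnd
  obtain ⟨c, hc⟩ := hsnd
  simp only [← Nonneg.coe_smul] at hc
  have hsum : ∑ i, (c i : F) • x i = 0 := by
    refine (Module.forall_dual_apply_eq_zero_iff F _).mp fun φ => ?_
    simpa [f, map_sum, -Nonneg.coe_smul] using congr($hc (φ, 0))
  have hc0 := h _ (fun i => (c i).2) hsum
  simpa [f, hc0, -Nonneg.coe_smul] using congr($hc (0, 1))

theorem exists_dual_forall_pos_forall_eq {ι κ : Type*} [Fintype ι] [Fintype κ]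
    (x : ι → V) (v : κ → V)
    (h : ∀ (y : ι → F) (u : κ → F), (∀ i, 0 ≤ y i) → ∑ j, u j = 0 →
      ∑ i, y i • x i = ∑ j, u j • v j → y = 0) :
    ∃ (φ : Module.Dual F V) (c : F), (∀ i, 0 < φ (x i)) ∧ ∀ j, φ (v j) = c := by
  -- Homogenize: `φ (v j) = c` says that `(φ, -c)` vanishes on `(v j, 1)`.
  let W := Submodule.span F (Set.range fun j => (v j, (1 : F)))
  obtain ⟨ψ, hψ⟩ := exists_dual_forall_pos (fun i => W.mkQ (x i, 0)) fun (y : ι → F) hy hyx => by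
    have : W.mkQ (∑ i, y i • (x i, (0 : F))) = 0 := by
      simpa only [map_sum, map_smul] using hyx
    rw [Submodule.mkQ_apply, Submodule.Quotient.mk_eq_zero,
      Submodule.mem_span_range_iff_exists_fun] at this
    obtain ⟨u, hu⟩ := this
    simp only [Prod.smul_mk, smul_eq_mul, mul_one, mul_zero, Prod.ext_iff, Prod.fst_sum,
      Prod.snd_sum, Finset.sum_const_zero] at hu
    exact h y u hy hu.2 hu.1.symm
  refine ⟨ψ ∘ₗ W.mkQ ∘ₗ LinearMap.inl F V F, -ψ (W.mkQ (0, 1)), hψ, fun j => ?_⟩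
  have hvj : W.mkQ (v j, 1) = 0 :=
    (Submodule.Quotient.mk_eq_zero W).mpr (Submodule.subset_span ⟨j, rfl⟩)
  have : (v j, (1 : F)) = (v j, 0) + (0, 1) := by simp
  rw [this, map_add] at hvj
  simp only [LinearMap.comp_apply, LinearMap.inl_apply]
  linear_combination (map_add ψ _ _).symm.trans congr(ψ $hvj) + ψ.map_zero

end Alternatives

theorem AddSubmonoid.exists_nat_eq_of_mem_closure {M R : Type*} [AddCommMonoid M]
    [AddMonoidWithOne R] {S : Set M} (φ : M →+ R) (hS : ∀ s ∈ S, ∃ k : ℕ, 0 < k ∧ φ s = k)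
    {x : M} (hx : x ∈ closure S) :
    ∃ n : ℕ, φ x = n ∧ (x ≠ 0 → 0 < n) := by
  induction hx using closure_induction with
  | mem s hs =>
    obtain ⟨k, hk, hks⟩ := hS s hs
    exact ⟨k, hks, fun _ => hk⟩
  | zero => exact ⟨0, by simp, fun h => absurd rfl h⟩
  | add x y _ _ hx hy =>
    obtain ⟨m, hm, hm0⟩ := hx
    obtain ⟨n, hn, hn0⟩ := hy
    refine ⟨m + n, by simp [hm, hn], fun hxy => ?_⟩
    rcases eq_or_ne x 0 with rfl | hx0
    · exact Nat.add_pos_right _ (hn0 (by simpa using hxy))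
    · exact Nat.add_pos_left (hm0 hx0) _

theorem LinearIndependent.exists_dual_eq {K V ι : Type*} [Field K] [AddCommGroup V] [Module K V]
    {v : ι → V} (hv : LinearIndependent K v) (c : ι → K) :
    ∃ φ : Module.Dual K V, ∀ i, φ (v i) = c i := by
  obtain ⟨φ, hφ⟩ := LinearMap.exists_extend ((Module.Basis.span hv).constr K c)
  refine ⟨φ, fun i => ?_⟩
  rw [← (Module.Basis.span hv).constr_basis K c i, ← hφ, LinearMap.comp_apply,
    Module.Basis.span_apply, Submodule.subtype_apply]

theorem LinearMap.apply_sum_sum_nonneg {R M : Type*} [CommRing R] [PartialOrder R]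
    [IsOrderedRing R] [AddCommGroup M] [Module R M] (B : M →ₗ[R] M →ₗ[R] R) (a b : Multiset M)
    (h : ∀ x ∈ a, ∀ y ∈ b, 0 ≤ B x y) : 0 ≤ B a.sum b.sum := by
  induction a using Multiset.induction with
  | empty => simp
  | cons x a ih =>
    rw [Multiset.sum_cons, map_add, LinearMap.add_apply, map_multiset_sum]
    refine add_nonneg (Multiset.sum_nonneg fun r hr => ?_) (ih fun x hx => h x (by simp [hx]))
    obtain ⟨y, hy, rfl⟩ := Multiset.mem_map.mp hr
    exact h x (by simp) y hy

theorem exists_nat_mul_eq_int {κ : Type*} [Fintype κ] (q : κ → ℚ) :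
    ∃ D : ℕ, 0 < D ∧ ∀ k, ∃ m : ℤ, (D : ℚ) * q k = m := by
  refine ⟨∏ k, (q k).den, Finset.prod_pos fun k _ => (q k).den_pos, fun k => ?_⟩
  obtain ⟨e, he⟩ := Finset.dvd_prod_of_mem (fun k => (q k).den) (Finset.mem_univ k)
  refine ⟨(q k).num * e, ?_⟩
  rw [he, Nat.cast_mul, mul_comm, ← mul_assoc, Rat.mul_den_eq_num]
  push_cast
  ring

theorem exists_nat_mul_eq_nat {κ : Type*} [Fintype κ] (q : κ → ℚ) (hq : ∀ k, 0 < q k) :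
    ∃ D : ℕ, ∀ k, ∃ n : ℕ, 0 < n ∧ (D : ℚ) * q k = n := by
  obtain ⟨D, hD, hm⟩ := exists_nat_mul_eq_int q
  refine ⟨D, fun k => ?_⟩
  obtain ⟨m, hmk⟩ := hm k
  have hm0 : 0 < m := by exact_mod_cast hmk ▸ mul_pos (Nat.cast_pos.mpr hD) (hq k)
  exact ⟨m.toNat, by omega, by rw [hmk]; exact_mod_cast (Int.toNat_of_nonneg hm0.le).symm⟩

section Relations

variable {M κ ι : Type*} [AddCommGroup M] [Fintype κ] [Fintype ι]

theorem exists_int_relation_of_rat_relation [Module ℚ M] (v : ι → M) (w : κ → M)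
    (z : ι → ℚ) (y : κ → ℚ) (hy : ∀ k, 0 ≤ y k) (hz : ∑ j, z j = 0)
    (h : ∑ j, z j • v j = ∑ k, y k • w k) :
    ∃ (Z : ι → ℤ) (Y : κ → ℕ), ∑ j, Z j = 0 ∧ ∑ j, Z j • v j = ∑ k, Y k • w k ∧
      ∀ k, Y k = 0 → y k = 0 := by
  obtain ⟨D, hD, hm⟩ := exists_nat_mul_eq_int (Sum.elim z y)
  choose m hm using hm
  have hmz : ∀ j, (D : ℚ) * z j = m (.inl j) := fun j => hm (.inl j)
  have hmy : ∀ k, (D : ℚ) * y k = m (.inr k) := fun k => hm (.inr k)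
  have hmy0 : ∀ k, 0 ≤ m (.inr k) := fun k => by
    exact_mod_cast (hmy k) ▸ mul_nonneg D.cast_nonneg (hy k)
  refine ⟨fun j => m (.inl j), fun k => (m (.inr k)).toNat, ?_, ?_, fun k hk => ?_⟩
  · have : ((∑ j, m (.inl j) : ℤ) : ℚ) = D * ∑ j, z j := by
      simp [Finset.mul_sum, hmz]
    rw [hz, mul_zero] at this
    exact_mod_cast this
  · have := congrArg ((D : ℚ) • ·) h
    simp only [Finset.smul_sum, smul_smul] at this
    convert this using 2 with j _ k _
    · rw [← Int.cast_smul_eq_zsmul ℚ, hmz]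
    · rw [← Nat.cast_smul_eq_nsmul ℚ, ← Int.cast_natCast, Int.toNat_of_nonneg (hmy0 k), hmy]
  · rw [Int.toNat_eq_zero] at hk
    have : (D : ℚ) * y k ≤ 0 := by rw [hmy]; exact_mod_cast hk
    exact le_antisymm (nonpos_of_mul_nonpos_right this (by exact_mod_cast hD)) (hy k)

theorem exists_multiset_sum_eq_of_int_relation (v : ι → M) (w : κ → M) (Z : ι → ℤ) (Y : κ → ℕ)
    (hZ : ∑ j, Z j = 0) (h : ∑ j, Z j • v j = ∑ k, Y k • w k) :
    ∃ a d : Multiset M, (∀ x ∈ a, ∃ j, 0 < Z j ∧ v j = x) ∧ (∀ x ∈ d, ∃ j, Z j < 0 ∧ v j = x) ∧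
      Multiset.card a = Multiset.card d ∧
      a.sum = d.sum + (∑ k, Multiset.replicate (Y k) (w k)).sum := by
  refine ⟨∑ j, .replicate (Z j).toNat (v j), ∑ j, .replicate (-Z j).toNat (v j), ?_, ?_, ?_, ?_⟩
  · simp only [Multiset.mem_sum, Multiset.mem_replicate]
    rintro x ⟨j, -, hj, rfl⟩
    exact ⟨j, by omega, rfl⟩
  · simp only [Multiset.mem_sum, Multiset.mem_replicate]
    rintro x ⟨j, -, hj, rfl⟩
    exact ⟨j, by omega, rfl⟩
  · simp only [Multiset.card_sum, Multiset.card_replicate]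
    zify
    simp only [Int.toNat_sub_toNat_neg, ← sub_eq_zero, ← Finset.sum_sub_distrib, hZ]
  · simp only [Multiset.sum_sum, Multiset.sum_replicate, ← h]
    rw [← sub_eq_iff_eq_add', ← Finset.sum_sub_distrib]
    refine Finset.sum_congr rfl fun j _ => ?_
    rw [← natCast_zsmul, ← natCast_zsmul, ← sub_smul, Int.toNat_sub_toNat_neg]

end Relations

namespace RootPairing

variable {ι R M N : Type*} [Field R] [AddCommGroup M] [Module R M] [AddCommGroup N] [Module R N]

section RootForm

variable [Fintype ι] [LinearOrder R] [IsStrictOrderedRing R]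
  (P : RootPairing ι R M N) [P.IsCrystallographic]

theorem zero_lt_pairingIn_iff_zero_lt_rootForm {i j : ι} :
    0 < P.pairingIn ℤ i j ↔ 0 < P.RootForm (P.root i) (P.root j) := by
  have h2 := P.toInvariantForm.two_mul_apply_root_root i j
  have hjj : 0 < P.RootForm (P.root j) (P.root j) :=
    P.rootForm_pos_of_ne_zero (Submodule.subset_span ⟨j, rfl⟩) (P.ne_zero j)
  simp only [RootPairing.toInvariantForm_form, ← P.algebraMap_pairingIn ℤ, algebraMap_int_eq,
    eq_intCast] at h2
  rw [← mul_pos_iff_of_pos_left (zero_lt_two' R), h2, mul_pos_iff_of_pos_right hjj, Int.cast_pos]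

theorem root_sub_root_mem_of_rootForm_pos {i j : ι} (h : 0 < P.RootForm (P.root i) (P.root j))
    (hij : P.root i ≠ P.root j) : P.root i - P.root j ∈ Set.range P.root :=
  P.root_sub_root_mem_of_pairingIn_pos ((P.zero_lt_pairingIn_iff_zero_lt_rootForm).mpr h)
    (ne_of_apply_ne _ hij)

theorem root_add_root_mem_of_rootForm_neg {i j : ι} (h : P.RootForm (P.root i) (P.root j) < 0)
    (hij : P.root i ≠ -P.root j) : P.root i + P.root j ∈ Set.range P.root := by
  have hj : P.root (P.reflectionPerm j j) = -P.root j := by simp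
  simpa [hj] using P.root_sub_root_mem_of_rootForm_pos (j := P.reflectionPerm j j)
    (by simpa [hj] using h) (by rwa [hj])

end RootForm

structure IsPositiveSystem (P : RootPairing ι R M N) (pos sim : Set ι) : Prop where
  root_mem_closure : ∀ i ∈ pos, P.root i ∈ AddSubmonoid.closure (P.root '' sim)
  mem_or_neg_mem : ∀ i, i ∈ pos ∨ ∃ j ∈ pos, P.root i = -P.root j
  linearIndependent : LinearIndependent R fun s : sim => P.root s

namespace IsPositiveSystem

variable {P : RootPairing ι R M N} {pos sim : Set ι}

noncomputable def height (hP : P.IsPositiveSystem pos sim) : Module.Dual R M :=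
  (hP.linearIndependent.exists_dual_eq fun _ => 1).choose

theorem height_root (hP : P.IsPositiveSystem pos sim) {s : ι} (hs : s ∈ sim) :
    hP.height (P.root s) = 1 :=
  (hP.linearIndependent.exists_dual_eq fun _ => 1).choose_spec ⟨s, hs⟩

theorem height_sum (hP : P.IsPositiveSystem pos sim) {c : Multiset M}
    (hc : ∀ x ∈ c, x ∈ P.root '' sim) : hP.height c.sum = Multiset.card c := by
  rw [map_multiset_sum, Multiset.map_congr rfl fun x hx => ?_, Multiset.map_const',
    Multiset.sum_replicate, nsmul_one]
  obtain ⟨s, hs, rfl⟩ := hc x hx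
  exact hP.height_root hs

variable [LinearOrder R] [IsStrictOrderedRing R]

theorem one_le_height (hP : P.IsPositiveSystem pos sim) {x : M} (hx : x ∈ P.root '' pos) :
    1 ≤ hP.height x := by
  obtain ⟨i, hi, rfl⟩ := hx
  obtain ⟨n, hn, hn0⟩ := AddSubmonoid.exists_nat_eq_of_mem_closure hP.height.toAddMonoidHom
    (by rintro _ ⟨s, hs, rfl⟩; exact ⟨1, one_pos, by simp [hP.height_root hs]⟩)
    (hP.root_mem_closure i hi)
  rw [LinearMap.toAddMonoidHom_coe] at hn
  rw [hn]
  exact_mod_cast hn0 (P.ne_zero i)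

theorem sum_ne_zero (hP : P.IsPositiveSystem pos sim) {d : Multiset M}
    (hd : ∀ y ∈ d, y ∈ P.root '' pos) (hd0 : d ≠ 0) : d.sum ≠ 0 := by
  intro h0
  have hle : Multiset.card (d.map hP.height) • (1 : R) ≤ (d.map hP.height).sum :=
    Multiset.card_nsmul_le_sum (by simpa using fun y hy => hP.one_le_height (hd y hy))
  rw [← map_multiset_sum, h0, map_zero, Multiset.card_map, nsmul_one] at hle
  exact (Nat.cast_pos.mpr (Multiset.card_pos.mpr hd0)).not_ge hle

variable [Fintype ι]

theorem exists_rootForm_neg (hP : P.IsPositiveSystem pos sim) {a d c : Multiset M}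
    (hd : ∀ y ∈ d, y ∈ P.root '' pos) (hd0 : d ≠ 0) (hsum : a.sum = d.sum + c.sum)
    (had : ∀ x ∈ a, ∀ y ∈ d, P.RootForm x y ≤ 0) : ∃ y ∈ d, ∃ z ∈ c, P.RootForm y z < 0 := by
  have hdd : 0 < P.RootForm d.sum d.sum := P.rootForm_pos_of_ne_zero
    (multiset_sum_mem _ fun y hy => by
      obtain ⟨i, -, rfl⟩ := hd y hy
      exact Submodule.subset_span ⟨i, rfl⟩) (hP.sum_ne_zero hd hd0)
  have had : P.RootForm d.sum a.sum ≤ 0 := by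
    simpa using (-P.RootForm).apply_sum_sum_nonneg d a fun y hy x hx => by
      simpa [← P.rootForm_symmetric.eq x y] using had x hx y hy
  by_contra! h
  have := P.RootForm.apply_sum_sum_nonneg d c h
  rw [hsum, map_add] at had
  linarith

variable [P.IsCrystallographic]

theorem rootLE_or_rootLE_of_rootForm_pos (hP : P.IsPositiveSystem pos sim) {x y : M}
    (hx : x ∈ P.root '' pos) (hy : y ∈ P.root '' pos) (h : 0 < P.RootForm x y) (hxy : x ≠ y) :
    rootLE (P.root '' sim) y x ∨ rootLE (P.root '' sim) x y := by
  obtain ⟨i, -, rfl⟩ := hx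
  obtain ⟨j, -, rfl⟩ := hy
  obtain ⟨k, hk⟩ := P.root_sub_root_mem_of_rootForm_pos h hxy
  rcases hP.mem_or_neg_mem k with hk' | ⟨l, hl, hkl⟩
  · exact .inl (by rw [rootLE, ← hk]; exact hP.root_mem_closure k hk')
  · refine .inr ?_
    rw [rootLE, ← neg_sub, ← hk, hkl, neg_neg]
    exact hP.root_mem_closure l hl

theorem add_mem_of_rootForm_neg (hP : P.IsPositiveSystem pos sim) {x y : M}
    (hx : x ∈ P.root '' pos) (hy : y ∈ P.root '' sim) (h : P.RootForm x y < 0) :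
    x + y ∈ P.root '' pos := by
  have hx1 := hP.one_le_height hx
  obtain ⟨s, hs, rfl⟩ := hy
  obtain ⟨i, -, rfl⟩ := hx
  have hs1 := hP.height_root hs
  obtain ⟨k, hk⟩ := P.root_add_root_mem_of_rootForm_neg h fun h' => by
    have := congr(hP.height $h')
    rw [map_neg, hs1] at this
    linarith
  rcases hP.mem_or_neg_mem k with hk' | ⟨l, hl, hkl⟩
  · exact ⟨k, hk', hk⟩
  · have := hP.one_le_height ⟨l, hl, rfl⟩
    have hsum := congr(hP.height $hk)
    rw [hkl, map_neg, map_add, hs1] at hsum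
    linarith

end IsPositiveSystem

structure IsBalancedRelation (P : RootPairing ι R M N) (pos sim : Set ι) (a d c : Multiset M) :
    Prop where
  mem_left : ∀ x ∈ a, x ∈ P.root '' pos
  mem_right : ∀ y ∈ d, y ∈ P.root '' pos
  mem_simple : ∀ z ∈ c, z ∈ P.root '' sim
  not_rootLE : ∀ x ∈ a, ∀ y ∈ d, ¬ rootLE (P.root '' sim) y x
  card_eq : Multiset.card a = Multiset.card d
  sum_eq : a.sum = d.sum + c.sum

namespace IsBalancedRelation

variable [LinearOrder R] [IsStrictOrderedRing R] [Fintype ι] {P : RootPairing ι R M N}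
  [P.IsCrystallographic] {pos sim : Set ι}

theorem erase_erase_add [DecidableEq M] {a d c : Multiset M}
    (h : P.IsBalancedRelation pos sim a d c)
    (hP : P.IsPositiveSystem pos sim) {x y : M} (hx : x ∈ a) (hy : y ∈ d)
    (hxy : 0 < P.RootForm x y) :
    ∃ w ≠ 0, P.IsBalancedRelation pos sim (a.erase x) (d.erase y) (c + w) := by
  have hne : x ≠ y := fun heq => h.not_rootLE x hx y hy (by simp [rootLE, heq])
  have hle : rootLE (P.root '' sim) x y :=
    (hP.rootLE_or_rootLE_of_rootForm_pos (h.mem_left x hx) (h.mem_right y hy) hxy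
      hne).resolve_left (h.not_rootLE x hx y hy)
  obtain ⟨w, hw, hwsum⟩ := AddSubmonoid.exists_multiset_of_mem_closure hle
  refine ⟨w, fun hw0 => hne ?_, fun x' hx' => h.mem_left x' (Multiset.mem_of_mem_erase hx'),
    fun y' hy' => h.mem_right y' (Multiset.mem_of_mem_erase hy'),
    by simpa [or_imp, forall_and] using ⟨h.mem_simple, hw⟩,
    fun x' hx' y' hy' =>
      h.not_rootLE x' (Multiset.mem_of_mem_erase hx') y' (Multiset.mem_of_mem_erase hy'),
    by rw [Multiset.card_erase_of_mem hx, Multiset.card_erase_of_mem hy, h.card_eq], ?_⟩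
  · rw [← sub_eq_zero, ← neg_sub, ← hwsum, hw0, Multiset.sum_zero, neg_zero]
  · have hsum := h.sum_eq
    rw [← Multiset.sum_erase hx, ← Multiset.sum_erase hy] at hsum
    rw [Multiset.sum_add, hwsum, ← add_right_inj x, hsum]
    abel

theorem cons_erase_erase [DecidableEq M] {a d c : Multiset M}
    (h : P.IsBalancedRelation pos sim a d c)
    (hP : P.IsPositiveSystem pos sim) {y z : M} (hy : y ∈ d) (hz : z ∈ c)
    (hyz : P.RootForm y z < 0) :
    P.IsBalancedRelation pos sim a ((y + z) ::ₘ d.erase y) (c.erase z) := by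
  refine ⟨h.mem_left, ?_, fun z' hz' => h.mem_simple z' (Multiset.mem_of_mem_erase hz'), ?_,
    by rw [Multiset.card_cons, Multiset.card_erase_add_one hy, h.card_eq], ?_⟩
  · simp only [Multiset.mem_cons, forall_eq_or_imp]
    exact ⟨hP.add_mem_of_rootForm_neg (h.mem_right y hy) (h.mem_simple z hz) hyz,
      fun y' hy' => h.mem_right y' (Multiset.mem_of_mem_erase hy')⟩
  · simp only [Multiset.mem_cons, forall_eq_or_imp]
    refine fun x hx => ⟨fun hle => h.not_rootLE x hx y hy ?_,
      fun y' hy' => h.not_rootLE x hx y' (Multiset.mem_of_mem_erase hy')⟩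
    have := AddSubmonoid.add_mem _ hle (AddSubmonoid.subset_closure (h.mem_simple z hz))
    rwa [sub_add_eq_sub_sub, sub_add_cancel] at this
  · have hsum := h.sum_eq
    rw [← Multiset.sum_erase hy, ← Multiset.sum_erase hz] at hsum
    rw [Multiset.sum_cons, hsum]
    abel

theorem eq_zero {a d c : Multiset M} (h : P.IsBalancedRelation pos sim a d c)
    (hP : P.IsPositiveSystem pos sim) : a = 0 ∧ c = 0 := by
  classical
  by_cases ha0 : a = 0
  · subst ha0
    obtain rfl : d = 0 := Multiset.card_eq_zero.mp (by simpa using h.card_eq.symm)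
    have hc := hP.height_sum h.mem_simple
    rw [← zero_add c.sum, ← Multiset.sum_zero, ← h.sum_eq, Multiset.sum_zero, map_zero] at hc
    exact ⟨rfl, Multiset.card_eq_zero.mp (by exact_mod_cast hc.symm)⟩
  by_cases hpair : ∃ x ∈ a, ∃ y ∈ d, 0 < P.RootForm x y
  · obtain ⟨x, hx, y, hy, hxy⟩ := hpair
    obtain ⟨w, hw0, hw⟩ := h.erase_erase_add hP hx hy hxy
    exact absurd (add_eq_zero.mp (hw.eq_zero hP).2).2 hw0
  · push Not at hpair
    obtain ⟨y, hy, z, hz, hyz⟩ := hP.exists_rootForm_neg h.mem_right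
      (fun hd0 => ha0 (Multiset.card_eq_zero.mp (h.card_eq.trans (hd0 ▸ rfl)))) h.sum_eq hpair
    exact absurd ((h.cons_erase_erase hP hy hz hyz).eq_zero hP).1 ha0
termination_by (Multiset.card a, Multiset.card c)
decreasing_by
  · exact .left _ _ (by classical exact Multiset.card_erase_lt_of_mem hx)
  · exact .right _ (by classical exact Multiset.card_erase_lt_of_mem hz)

end IsBalancedRelation

end RootPairing

section Antichain

variable {ι M N : Type*} [Fintype ι] [AddCommGroup M] [Module ℚ M] [AddCommGroup N]
  [Module ℚ N] {Q : RootPairing ι ℚ M N} [Q.IsCrystallographic] {pos sim : Set ι}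

theorem RootPairing.IsPositiveSystem.eq_zero_of_isAntichainIn (hP : Q.IsPositiveSystem pos sim)
    {Γ : Set M} (hΓ : IsAntichainIn (Q.root '' sim) (Q.root '' pos) Γ) [Fintype Γ] [Fintype sim]
    (y : sim → ℚ) (u : Γ → ℚ) (hy : ∀ s, 0 ≤ y s) (hu : ∑ γ, u γ = 0)
    (h : ∑ s, y s • Q.root s = ∑ γ, u γ • (γ : M)) : y = 0 := by
  obtain ⟨Z, Y, hZ, hZY, hY⟩ := exists_int_relation_of_rat_relation (fun γ : Γ => (γ : M))
    (fun s : sim => Q.root s) u y hy hu h.symm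
  obtain ⟨a, d, ha, hd, hcard, hsum⟩ := exists_multiset_sum_eq_of_int_relation _ _ Z Y hZ hZY
  have hrel : Q.IsBalancedRelation pos sim a d (∑ s, .replicate (Y s) (Q.root s)) := by
    refine ⟨fun x hx => ?_, fun x hx => ?_, ?_, fun x hx x' hx' => ?_, hcard, hsum⟩
    · obtain ⟨γ, -, rfl⟩ := ha x hx
      exact hΓ.1 γ.2
    · obtain ⟨γ, -, rfl⟩ := hd x hx
      exact hΓ.1 γ.2
    · simp only [Multiset.mem_sum, Multiset.mem_replicate]
      rintro _ ⟨s, -, -, rfl⟩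
      exact ⟨s, s.2, rfl⟩
    · obtain ⟨γ, hγ, rfl⟩ := ha x hx
      obtain ⟨δ, hδ, rfl⟩ := hd x' hx'
      exact hΓ.2 δ δ.2 γ γ.2 fun h => (Subtype.ext h ▸ hγ).not_gt hδ
  have hc := (hrel.eq_zero hP).2
  have hY0 := congrArg Multiset.card hc
  simp only [Multiset.card_sum, Multiset.card_replicate, Multiset.card_zero,
    Finset.sum_eq_zero_iff, Finset.mem_univ, true_imp_iff] at hY0
  exact funext fun s => hY s (hY0 s)

end Antichain

theorem antichain_on_affine_hyperplane_general
    {ι M N : Type*} [Fintype ι] [AddCommGroup M] [Module ℚ M] [AddCommGroup N] [Module ℚ N]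
    (Q : RootPairing ι ℚ M N)
    (hcrys : Q.IsCrystallographic)
    -- a system of positive roots `pos` with corresponding simple roots `sim`
    (pos sim : Set ι)
    (hspan : ∀ i ∈ pos, Q.root i ∈ AddSubmonoid.closure (Q.root '' sim))
    (hdec : ∀ i : ι, i ∈ pos ∨ ∃ j ∈ pos, Q.root i = -Q.root j)
    (hind : LinearIndependent ℚ (fun s : sim => Q.root s))
    (Γ : Set M) (hΓ : IsAntichainIn (Q.root '' sim) (Q.root '' pos) Γ)
    (hΓne : Γ.Nonempty) :
    ∃ (φ : Module.Dual ℚ M) (n : ℕ), 0 < n ∧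
      (∀ s ∈ sim, ∃ k : ℕ, 0 < k ∧ φ (Q.root s) = k) ∧
      ∀ γ ∈ Γ, φ γ = n := by
  classical
  have hP : Q.IsPositiveSystem pos sim := ⟨hspan, hdec, hind⟩
  have : Fintype Γ :=
    ((Set.finite_range Q.root).subset (hΓ.1.trans (Set.image_subset_range _ _))).fintype
  obtain ⟨φ, c, hφ, hφΓ⟩ := exists_dual_forall_pos_forall_eq (fun s : sim => Q.root s)
    (fun γ : Γ => (γ : M)) (hP.eq_zero_of_isAntichainIn hΓ)
  obtain ⟨D, hDφ⟩ := exists_nat_mul_eq_nat (fun s : sim => φ (Q.root s)) hφ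
  have hsim : ∀ s ∈ sim, ∃ k : ℕ, 0 < k ∧ ((D : ℚ) • φ) (Q.root s) = k :=
    fun s hs => hDφ ⟨s, hs⟩
  obtain ⟨γ₀, hγ₀⟩ := hΓne
  obtain ⟨i₀, hi₀, rfl⟩ := hΓ.1 hγ₀
  obtain ⟨n, hn, hn0⟩ := AddSubmonoid.exists_nat_eq_of_mem_closure ((D : ℚ) • φ).toAddMonoidHom
    (by rintro _ ⟨s, hs, rfl⟩; exact hsim s hs) (hspan i₀ hi₀)
  refine ⟨(D : ℚ) • φ, n, hn0 (Q.ne_zero i₀), hsim, fun γ hγ => ?_⟩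
  rw [LinearMap.toAddMonoidHom_coe] at hn
  rw [← hn, LinearMap.smul_apply, LinearMap.smul_apply, hφΓ ⟨γ, hγ⟩, hφΓ ⟨_, hγ₀⟩]

/-- Let `Γ ⊆ Δ⁺` be a non-empty antichain in the positive roots of a finite
root system.  Then there exist `H` in the Cartan subalgebra (an element of the dual space of
the root space) and a positive integer `n` such that `α(H)` is a positive integer for every
simple root `α` and `γ(H) = n` for every `γ ∈ Γ`. -/
theorem antichain_on_affine_hyperplane
    {ι M N : Type*} [Fintype ι] [AddCommGroup M] [Module ℚ M] [AddCommGroup N] [Module ℚ N]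
    (Q : RootPairing ι ℚ M N) [Q.IsRootSystem]
    (hcrys : Q.IsCrystallographic) (hredu : Q.IsReduced)
    -- a system of positive roots `pos` with corresponding simple roots `sim`
    (pos sim : Set ι) (hsim : sim ⊆ pos)
    (hspan : ∀ i ∈ pos, Q.root i ∈ AddSubmonoid.closure (Q.root '' sim))
    (hdec : ∀ i : ι, i ∈ pos ∨ ∃ j ∈ pos, Q.root i = -Q.root j)
    (hind : LinearIndependent ℚ (fun s : sim => Q.root s))
    (Γ : Set M) (hΓ : IsAntichainIn (Q.root '' sim) (Q.root '' pos) Γ)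
    (hΓne : Γ.Nonempty) :
    ∃ (φ : Module.Dual ℚ M) (n : ℕ), 0 < n ∧
      (∀ s ∈ sim, ∃ k : ℕ, 0 < k ∧ φ (Q.root s) = k) ∧
      ∀ γ ∈ Γ, φ γ = n :=
  antichain_on_affine_hyperplane_general Q hcrys pos sim hspan hdec hind Γ hΓ hΓne
end

section
/- Let γ, γ′ be two non-comparable positive roots of a finite root system with simple roots α₁,…,α_ℓ. Then there exists H in the Cartan subalgebra and a positive integer n with α_i(H) ∈ ℕ* for all i and γ(H) = γ′(H) = n. Concretely, writing γ = Σ c_i α_i, γ′ = Σ c′_i α_i, with I₊ = {i : c_i > c′_i}, I₀ = {i : c_i = c′_i}, I₋ = {i : c_i < c′_i}, c₊ = Σ_{i∈I₊} c_i, c′₊ = Σ_{i∈I₊} c′_i, c₋ = Σ_{i∈I₋} c_i, c′₋ = Σ_{i∈I₋} c′_i, c = Σ_{i∈I₀} c_i, the element H = Σ_{i∈I₊}(c′₋ − c₋)H_i + Σ_{i∈I₋}(c₊ − c′₊)H_i + Σ_{i∈I₀} H_i with n = c′₋c₊ − c₋c′₊ + c works. -/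
/-!
Write `γ = Σ cᵢ αᵢ`, `γ′ = Σ c′ᵢ αᵢ`. Non-comparability forces both `I₊` and `I₋` to be nonempty, so
`c′₊ < c₊` and `c₋ < c′₋`. A functional taking the values `a`, `b`, `1` on the simple roots indexed
by `I₊`, `I₋`, `I₀` satisfies `H(γ) − H(γ′) = a (c₊ − c′₊) − b (c′₋ − c₋)`, which vanishes for
`a = c′₋ − c₋`, `b = c₊ − c′₊`; these are positive integers, and then
`H(γ) = a c₊ + b c₋ + c = c′₋ c₊ − c₋ c′₊ + c`.
-/

open Finset

section RootOrder

variable {R ι M : Type*} [Ring R] [AddCommGroup M] [Module R M] [Fintype ι]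

theorem rootLE_sum_natCast_smul_of_le (b : ι → M) {d d' : ι → ℕ} (h : d ≤ d') :
    rootLE (Set.range b) (∑ i, (d i : R) • b i) (∑ i, (d' i : R) • b i) := by
  have hsplit : ∑ i, (d' i : R) • b i = ∑ i, (d i : R) • b i + ∑ i, (d' i - d i) • b i := by
    simp only [Nat.cast_smul_eq_nsmul, ← sum_add_distrib, ← add_nsmul, Nat.add_sub_of_le (h _)]
  rw [rootLE, hsplit, add_sub_cancel_left]
  exact sum_mem fun i _ => nsmul_mem (AddSubmonoid.subset_closure (Set.mem_range_self i)) _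

theorem sum_filter_lt_lt_of_not_rootLE (b : ι → M) {d d' : ι → ℕ}
    (h : ¬ rootLE (Set.range b) (∑ i, (d i : R) • b i) (∑ i, (d' i : R) • b i)) :
    ∑ i with d' i < d i, d' i < ∑ i with d' i < d i, d i := by
  obtain ⟨j, hj⟩ : ∃ j, d' j < d j := by
    contrapose! h
    exact rootLE_sum_natCast_smul_of_le b h
  exact sum_lt_sum_of_nonempty ⟨j, by simpa using hj⟩ fun i hi => (mem_filter.1 hi).2

end RootOrder

theorem Finset.sum_mul_ite_lt_ite_lt {ι α R : Type*} [LinearOrder α]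
    [NonUnitalNonAssocSemiring R] (s : Finset ι) (u v : ι → α) (f : ι → R) (a b e : R) :
    ∑ i ∈ s, f i * (if v i < u i then a else if u i < v i then b else e) =
      (∑ i ∈ s with v i < u i, f i) * a + (∑ i ∈ s with u i < v i, f i) * b
        + (∑ i ∈ s with u i = v i, f i) * e := by
  simp only [sum_filter, sum_mul, ← sum_add_distrib]
  refine sum_congr rfl fun i _ => ?_
  rcases lt_trichotomy (u i) (v i) with h | h | h
  · simp [h, h.not_gt, h.ne]
  · simp [h]
  · simp [h, h.not_gt, h.ne']

namespace Module.Basis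

variable {ι R M α : Type*} [Fintype ι] [CommRing R] [AddCommGroup M] [Module R M] [LinearOrder α]

/-- The paper's `H` for `u = c`, `v = c′`, `a = c′₋ − c₋`, `b = c₊ − c′₊`. -/
noncomputable def trichotomyDual (B : Basis ι R M) (u v : ι → α) (a b : R) : Dual R M :=
  (∑ i with v i < u i, a • B.coord i) + (∑ i with u i < v i, b • B.coord i)
    + ∑ i with u i = v i, B.coord i

theorem trichotomyDual_apply_self (B : Basis ι R M) (u v : ι → α) (a b : R) (j : ι) :
    B.trichotomyDual u v a b (B j) = if v j < u j then a else if u j < v j then b else 1 := by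
  classical
  rcases lt_trichotomy (u j) (v j) with h | h | h
  · simp [trichotomyDual, Finsupp.single_apply, h, h.not_gt, h.ne]
  · simp [trichotomyDual, Finsupp.single_apply, h]
  · simp [trichotomyDual, Finsupp.single_apply, h, h.not_gt, h.ne']

theorem exists_pos_trichotomyDual_natCast_apply_self (B : Basis ι R M) (u v : ι → α) {a b : ℕ}
    (ha : 0 < a) (hb : 0 < b) (j : ι) :
    ∃ k : ℕ, 0 < k ∧ B.trichotomyDual u v (a : R) (b : R) (B j) = k := by
  rw [trichotomyDual_apply_self]
  split_ifs
  · exact ⟨a, ha, rfl⟩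
  · exact ⟨b, hb, rfl⟩
  · exact ⟨1, one_pos, Nat.cast_one.symm⟩

theorem trichotomyDual_apply_sum_smul (B : Basis ι R M) (u v : ι → α) (a b : R) (d : ι → R) :
    B.trichotomyDual u v a b (∑ i, d i • B i) =
      (∑ i with v i < u i, d i) * a + (∑ i with u i < v i, d i) * b + ∑ i with u i = v i, d i := by
  simp only [map_sum, map_smul, trichotomyDual_apply_self, smul_eq_mul, sum_mul_ite_lt_ite_lt,
    mul_one]

end Module.Basis

open Finset in
theorem noncomparable_pair_on_affine_hyperplane_general
    {ι M : Type*} [Fintype ι] [AddCommGroup M] [Module ℚ M]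
    (B : Module.Basis ι ℚ M)
    (c c' : ι → ℕ) (γ γ' : M)
    (hγ : γ = ∑ i, (c i : ℚ) • B i) (hγ' : γ' = ∑ i, (c' i : ℚ) • B i)
    -- `γ` and `γ′` are non-comparable
    (hnc : ¬ rootLE (Set.range ⇑B) γ γ' ∧ ¬ rootLE (Set.range ⇑B) γ' γ)
    -- the index sets `I₊`, `I₀`, `I₋` and the sums `c₊`, `c′₊`, `c₋`, `c′₋`, `c`
    (Ip I0 Im : Finset ι)
    (hIp : Ip = Finset.univ.filter fun i => c' i < c i)
    (hI0 : I0 = Finset.univ.filter fun i => c i = c' i)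
    (hIm : Im = Finset.univ.filter fun i => c i < c' i)
    (cp cp' cm cm' c0 : ℕ)
    (hcp : cp = ∑ i ∈ Ip, c i) (hcp' : cp' = ∑ i ∈ Ip, c' i)
    (hcm : cm = ∑ i ∈ Im, c i) (hcm' : cm' = ∑ i ∈ Im, c' i)
    (hc0 : c0 = ∑ i ∈ I0, c i)
    -- the concrete element `H` of the Cartan subalgebra
    (φ : Module.Dual ℚ M)
    (hφ : φ = (∑ i ∈ Ip, ((cm' : ℚ) - (cm : ℚ)) • B.coord i)
        + (∑ i ∈ Im, ((cp : ℚ) - (cp' : ℚ)) • B.coord i)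
        + ∑ i ∈ I0, B.coord i) :
    -- abstract existence
    (∃ (ψ : Module.Dual ℚ M) (n : ℕ), 0 < n ∧
      (∀ i : ι, ∃ k : ℕ, 0 < k ∧ ψ (B i) = k) ∧ ψ γ = n ∧ ψ γ' = n) ∧
    -- the concrete pair `(H, n)` works
    (∀ i : ι, ∃ k : ℕ, 0 < k ∧ φ (B i) = k) ∧
    φ γ = (cm' : ℚ) * cp - (cm : ℚ) * cp' + c0 ∧
    φ γ' = (cm' : ℚ) * cp - (cm : ℚ) * cp' + c0 ∧
    ∃ n : ℕ, 0 < n ∧ (n : ℚ) = (cm' : ℚ) * cp - (cm : ℚ) * cp' + c0 := by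
  subst hγ hγ' hIp hI0 hIm
  have hcp_lt : cp' < cp := hcp ▸ hcp' ▸ sum_filter_lt_lt_of_not_rootLE B hnc.1
  have hcm_lt : cm < cm' := hcm ▸ hcm' ▸ sum_filter_lt_lt_of_not_rootLE B hnc.2
  replace hφ : φ = B.trichotomyDual c c' ((cm' - cm : ℕ) : ℚ) ((cp - cp' : ℕ) : ℚ) := by
    rw [hφ, Nat.cast_sub hcm_lt.le, Nat.cast_sub hcp_lt.le]
    rfl
  have hφB (i : ι) : ∃ k : ℕ, 0 < k ∧ φ (B i) = k :=
    hφ ▸ B.exists_pos_trichotomyDual_natCast_apply_self c c' (Nat.sub_pos_of_lt hcm_lt)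
      (Nat.sub_pos_of_lt hcp_lt) i
  have hc0' : ∑ i with c i = c' i, c' i = c0 :=
    hc0 ▸ sum_congr rfl fun i hi => ((mem_filter.1 hi).2).symm
  have hφγ : φ (∑ i, (c i : ℚ) • B i) = (cm' : ℚ) * cp - (cm : ℚ) * cp' + c0 := by
    rw [hφ, Module.Basis.trichotomyDual_apply_sum_smul]
    push_cast [← Nat.cast_sum, ← hcp, ← hcm, ← hc0, hcm_lt.le, hcp_lt.le]
    ring
  have hφγ' : φ (∑ i, (c' i : ℚ) • B i) = (cm' : ℚ) * cp - (cm : ℚ) * cp' + c0 := by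
    rw [hφ, Module.Basis.trichotomyDual_apply_sum_smul]
    push_cast [← Nat.cast_sum, ← hcp', ← hcm', hc0', hcm_lt.le, hcp_lt.le]
    ring
  have hn : cm * cp' < cm' * cp := Nat.mul_lt_mul'' hcm_lt hcp_lt
  have hn_cast : ((cm' * cp - cm * cp' + c0 : ℕ) : ℚ) = (cm' : ℚ) * cp - (cm : ℚ) * cp' + c0 := by
    push_cast [hn.le]
    ring
  exact ⟨⟨φ, _, by omega, hφB, hφγ.trans hn_cast.symm, hφγ'.trans hn_cast.symm⟩,
    hφB, hφγ, hφγ', _, by omega, hn_cast⟩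

open Finset in
/-- Let `γ, γ′` be two non-comparable positive roots (nonnegative integer
combinations `γ = Σ c_i α_i`, `γ′ = Σ c′_i α_i` of the simple roots `α_i = B i`, which form a
basis of the Cartan dual, with dual basis `H_i = B.coord i`).  Then there is an `H` in the
Cartan subalgebra and a positive integer `n` with `α_i(H) ∈ ℕ*` for all `i` and
`γ(H) = γ′(H) = n`; concretely `H = Σ_{i∈I₊}(c′₋ − c₋)H_i + Σ_{i∈I₋}(c₊ − c′₊)H_i +
Σ_{i∈I₀} H_i` and `n = c′₋c₊ − c₋c′₊ + c` work. -/
theorem noncomparable_pair_on_affine_hyperplane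
    {ι M : Type*} [Fintype ι] [DecidableEq ι] [AddCommGroup M] [Module ℚ M]
    (B : Module.Basis ι ℚ M)
    (c c' : ι → ℕ) (γ γ' : M)
    (hγ : γ = ∑ i, (c i : ℚ) • B i) (hγ' : γ' = ∑ i, (c' i : ℚ) • B i)
    (hdist : γ ≠ γ')
    -- `γ` and `γ′` are non-comparable
    (hnc : ¬ rootLE (Set.range ⇑B) γ γ' ∧ ¬ rootLE (Set.range ⇑B) γ' γ)
    -- the index sets `I₊`, `I₀`, `I₋` and the sums `c₊`, `c′₊`, `c₋`, `c′₋`, `c`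
    (Ip I0 Im : Finset ι)
    (hIp : Ip = Finset.univ.filter fun i => c' i < c i)
    (hI0 : I0 = Finset.univ.filter fun i => c i = c' i)
    (hIm : Im = Finset.univ.filter fun i => c i < c' i)
    (cp cp' cm cm' c0 : ℕ)
    (hcp : cp = ∑ i ∈ Ip, c i) (hcp' : cp' = ∑ i ∈ Ip, c' i)
    (hcm : cm = ∑ i ∈ Im, c i) (hcm' : cm' = ∑ i ∈ Im, c' i)
    (hc0 : c0 = ∑ i ∈ I0, c i)
    -- the concrete element `H` of the Cartan subalgebra
    (φ : Module.Dual ℚ M)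
    (hφ : φ = (∑ i ∈ Ip, ((cm' : ℚ) - (cm : ℚ)) • B.coord i)
        + (∑ i ∈ Im, ((cp : ℚ) - (cp' : ℚ)) • B.coord i)
        + ∑ i ∈ I0, B.coord i) :
    -- abstract existence
    (∃ (ψ : Module.Dual ℚ M) (n : ℕ), 0 < n ∧
      (∀ i : ι, ∃ k : ℕ, 0 < k ∧ ψ (B i) = k) ∧ ψ γ = n ∧ ψ γ' = n) ∧
    -- the concrete pair `(H, n)` works
    (∀ i : ι, ∃ k : ℕ, 0 < k ∧ φ (B i) = k) ∧
    φ γ = (cm' : ℚ) * cp - (cm : ℚ) * cp' + c0 ∧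
    φ γ' = (cm' : ℚ) * cp - (cm : ℚ) * cp' + c0 ∧
    ∃ n : ℕ, 0 < n ∧ (n : ℚ) = (cm' : ℚ) * cp - (cm : ℚ) * cp' + c0 :=
  noncomparable_pair_on_affine_hyperplane_general B c c' γ γ' hγ hγ' hnc Ip I0 Im hIp hI0 hIm cp cp'
    cm cm' c0 hcp hcp' hcm hcm' hc0 φ hφ
end
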